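/- arXiv:2505.15761 — 2 statements merged into one kernel-verified Lean document; each statement's English description precedes it below -/
import Mathlib

section
/- Mal'cev's theorem (as used in the proof of Theorem 1): every finitely generated subgroup of the general linear group GL(n, ℚ) of invertible n × n matrices over the rational numbers is residually finite. -/
/-!
A finitely generated subgroup of `GL(n, ℚ)` has only finitely many denominators in the entries
of its generators and their inverses, so it lies in `GL(n, ℤ[1/d])` for a suitable `d ≠ 0`.
Reducing modulo primes `p ∤ d` gives homomorphisms onto finite groups `GL(n, 𝔽_p)`, and a
nontrivial element `u` survives once `p` is larger than the numerator of a nonzero entry of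
`u - 1`.
-/

open Function

namespace Group.ResiduallyFinite

theorem of_injective {G G' : Type*} [Group G] [Group G'] [ResiduallyFinite G'] (f : G →* G')
    (hf : Injective f) : ResiduallyFinite G := by
  rw [residuallyFinite_iff_exists_finiteIndexNormalSubgroup]
  intro g hg
  obtain ⟨K, hK⟩ := exists_finiteIndexNormalSubgroup_notMem (f g) ((map_ne_one_iff f hf).mpr hg)
  exact ⟨K.comap f, hK⟩

universe u

theorem exists_monoidHom_finite_ne_one {G : Type u} [Group G] [ResiduallyFinite G] (g : G)
    (hg : g ≠ 1) : ∃ (Q : Type u) (_ : Group Q) (_ : Finite Q) (φ : G →* Q), φ g ≠ 1 := by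
  obtain ⟨K, hK⟩ := exists_finiteIndexNormalSubgroup_notMem g hg
  exact ⟨G ⧸ K.toSubgroup, inferInstance, K.toSubgroup.finite_quotient_of_finiteIndex,
    QuotientGroup.mk' _, by
      rwa [ne_eq, QuotientGroup.mk'_apply, QuotientGroup.eq_one_iff,
        FiniteIndexNormalSubgroup.mem_toSubgroup_iff]⟩

end Group.ResiduallyFinite

theorem Subgroup.residuallyFinite_of_le_range {G G' : Type*} [Group G] [Group G']
    [Group.ResiduallyFinite G] {f : G →* G'} (hf : Injective f) {H : Subgroup G'}
    (hH : H ≤ f.range) : Group.ResiduallyFinite H :=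
  .of_injective ((MonoidHom.ofInjective hf).symm.toMonoidHom.comp (Subgroup.inclusion hH))
    fun _ _ hab => Subgroup.inclusion_injective hH ((MonoidHom.ofInjective hf).symm.injective hab)

def Ring.ResiduallyFinite (R : Type*) [CommRing R] : Prop :=
  ∀ r : R, r ≠ 0 → ∃ I : Ideal R, Finite (R ⧸ I) ∧ r ∉ I

namespace Matrix.GeneralLinearGroup

variable {ι R S : Type*} [Fintype ι] [DecidableEq ι] [CommRing R] [CommRing S]

theorem residuallyFinite (hR : Ring.ResiduallyFinite R) : Group.ResiduallyFinite (GL ι R) := by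
  rw [Group.residuallyFinite_iff_exists_finiteIndex]
  intro u hu
  obtain ⟨i, j, hij⟩ : ∃ i j, u i j ≠ (1 : GL ι R) i j := by
    by_contra! h
    exact hu (Units.ext (Matrix.ext h))
  obtain ⟨I, hI, hmem⟩ := hR _ (sub_ne_zero.mpr hij)
  refine ⟨(map (Ideal.Quotient.mk I)).ker, Subgroup.finiteIndex_ker _, fun hker => hmem ?_⟩
  have hentry : map (Ideal.Quotient.mk I) u i j = map (Ideal.Quotient.mk I) 1 i j := by
    rw [MonoidHom.mem_ker.mp hker, map_one]
  rwa [GeneralLinearGroup.map_apply, GeneralLinearGroup.map_apply, Ideal.Quotient.eq] at hentry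

theorem map_injective {f : R →+* S} (hf : Injective f) : Injective (map (n := ι) f) :=
  Units.map_injective (f := (f.mapMatrix : Matrix ι ι R →+* Matrix ι ι S).toMonoidHom)
    (Matrix.map_injective hf)

theorem mem_range_map_of_forall_mem_range {f : R →+* S} (hf : Injective f) {M : GL ι S}
    (hM : ∀ i j, M i j ∈ f.range) (hM' : ∀ i j, M⁻¹ i j ∈ f.range) :
    M ∈ (map f).range := by
  choose A hA using hM
  choose B hB using hM'
  have hmap : Injective (f.mapMatrix : Matrix ι ι R →+* Matrix ι ι S) := Matrix.map_injective hf
  have hA' : f.mapMatrix (Matrix.of A) = M := by ext i j; simp [hA]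
  have hB' : f.mapMatrix (Matrix.of B) = ↑M⁻¹ := by ext i j; simp [hB]
  have hAB : Matrix.of A * Matrix.of B = 1 := hmap <| by rw [map_mul, map_one, hA', hB', M.mul_inv]
  have hBA : Matrix.of B * Matrix.of A = 1 := hmap <| by rw [map_mul, map_one, hA', hB', M.inv_mul]
  exact ⟨⟨_, _, hAB, hBA⟩, Units.ext hA'⟩

end Matrix.GeneralLinearGroup

theorem Int.cast_zmod_ne_zero_of_natAbs_lt {p : ℕ} {a : ℤ} (ha : a ≠ 0) (hlt : a.natAbs < p) :
    (a : ZMod p) ≠ 0 := by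
  rw [ne_eq, ZMod.intCast_zmod_eq_zero_iff_dvd, ← Int.dvd_natAbs, Int.natCast_dvd_natCast]
  exact fun hdvd => (Nat.le_of_dvd (Int.natAbs_pos.mpr ha) hdvd).not_gt hlt

namespace Localization.Away

variable {d : ℤ}

theorem int_residuallyFinite (hd : d ≠ 0) : Ring.ResiduallyFinite (Localization.Away d) := by
  intro x hx
  obtain ⟨k, a, hxa⟩ := IsLocalization.Away.surj d x
  have ha : a ≠ 0 := by
    rintro rfl
    rw [map_zero] at hxa
    exact hx (((IsLocalization.Away.algebraMap_isUnit d).pow k).mul_left_eq_zero.mp hxa)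
  obtain ⟨p, hp_gt, hp⟩ := Nat.exists_infinite_primes (max d.natAbs a.natAbs + 1)
  have : Fact p.Prime := ⟨hp⟩
  have hdp : IsUnit ((Int.castRingHom (ZMod p)) d) :=
    isUnit_iff_ne_zero.mpr (Int.cast_zmod_ne_zero_of_natAbs_lt hd (by omega))
  set g := Localization.awayLift (Int.castRingHom (ZMod p)) d hdp
  refine ⟨RingHom.ker g, Finite.of_injective _ (RingHom.kerLift_injective g), fun hxg => ?_⟩
  have hga := congrArg g hxa
  rw [map_mul, RingHom.mem_ker.mp hxg, zero_mul, IsLocalization.Away.lift_eq] at hga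
  exact Int.cast_zmod_ne_zero_of_natAbs_lt ha (by omega) hga.symm

variable (hd : d ≠ 0)

noncomputable def intToRat : Localization.Away d →+* ℚ :=
  Localization.awayLift (Int.castRingHom ℚ) d (isUnit_iff_ne_zero.mpr (Int.cast_ne_zero.mpr hd))

@[simp]
theorem intToRat_algebraMap (z : ℤ) : intToRat hd (algebraMap ℤ _ z) = z :=
  IsLocalization.Away.lift_eq d (isUnit_iff_ne_zero.mpr (Int.cast_ne_zero.mpr hd)) z

theorem intToRat_injective : Injective (intToRat hd) := by
  refine (IsLocalization.lift_injective_iff _).mpr fun x y => ?_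
  rw [(IsLocalization.injective (Localization.Away d)
    (powers_le_nonZeroDivisors_of_noZeroDivisors hd)).eq_iff]
  simp

theorem mem_range_intToRat_of_den_dvd {q : ℚ} (hq : (q.den : ℤ) ∣ d) :
    q ∈ (intToRat hd).range := by
  obtain ⟨y, hy⟩ := (isUnit_of_dvd_unit (map_dvd (algebraMap ℤ (Localization.Away d)) hq)
    (IsLocalization.Away.algebraMap_isUnit d)).exists_right_inv
  have hfy : intToRat hd y = (q.den : ℚ)⁻¹ := by
    refine eq_inv_of_mul_eq_one_right ?_
    simpa using congrArg (intToRat hd) hy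
  refine ⟨algebraMap ℤ _ q.num * y, ?_⟩
  rw [map_mul, hfy, intToRat_algebraMap, ← div_eq_mul_inv, Rat.num_div_den]

end Localization.Away

open Localization.Away in
theorem Matrix.GeneralLinearGroup.exists_le_range_map_intToRat {ι : Type*} [Fintype ι]
    [DecidableEq ι] {H : Subgroup (GL ι ℚ)} (hH : H.FG) :
    ∃ (d : ℤ) (hd : d ≠ 0), H ≤ (map (intToRat hd)).range := by
  classical
  obtain ⟨S, rfl⟩ := hH
  let den (s : GL ι ℚ) (i j : ι) : ℤ := (s i j).den * (s⁻¹ i j).den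
  let d : ℤ := ∏ s ∈ S, ∏ i, ∏ j, den s i j
  have hd : d ≠ 0 := by positivity
  refine ⟨d, hd, (Subgroup.closure_le _).mpr fun s hs => ?_⟩
  have hdvd (i j) : den s i j ∣ d :=
    ((Finset.dvd_prod_of_mem (den s i) (Finset.mem_univ j)).trans
      (Finset.dvd_prod_of_mem (fun i => ∏ j, den s i j) (Finset.mem_univ i))).trans
      (Finset.dvd_prod_of_mem (fun s => ∏ i, ∏ j, den s i j) hs)
  exact mem_range_map_of_forall_mem_range (intToRat_injective hd)
    (fun i j => mem_range_intToRat_of_den_dvd hd ((Dvd.intro _ rfl).trans (hdvd i j)))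
    (fun i j => mem_range_intToRat_of_den_dvd hd ((Dvd.intro_left _ rfl).trans (hdvd i j)))

/-- Mal'cev's theorem: every finitely generated subgroup of `GL(n, ℚ)` is
residually finite, i.e. for every element `h ≠ 1` of the subgroup there is a
homomorphism to a finite group not killing `h`. -/
theorem malcev_fg_subgroup_GL_rat_residually_finite
    (n : ℕ) (H : Subgroup (GL (Fin n) ℚ)) (hFG : H.FG) :
    ∀ h : H, h ≠ 1 →
      ∃ (Q : Type) (_ : Group Q) (_ : Finite Q) (φ : H →* Q), φ h ≠ 1 := by
  obtain ⟨d, hd, hH⟩ := Matrix.GeneralLinearGroup.exists_le_range_map_intToRat hFG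
  have := Matrix.GeneralLinearGroup.residuallyFinite (ι := Fin n)
    (Localization.Away.int_residuallyFinite hd)
  have := Subgroup.residuallyFinite_of_le_range
    (Matrix.GeneralLinearGroup.map_injective (Localization.Away.intToRat_injective hd)) hH
  exact Group.ResiduallyFinite.exists_monoidHom_finite_ne_one
end

section
/- If G is a finitely generated infinite simple group, V is a finite-dimensional vector space over ℚ, and ρ : G → GL(V) is a group homomorphism into the group of ℚ-linear automorphisms of V, then ρ is trivial, i.e. ρ(g) = id_V for every g ∈ G. -/
/-!
A finitely generated subgroup of `GL_n(ℚ)` is residually finite: its generators and their inverses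
involve only finitely many denominators, so for a large prime `p` all their entries lie in `ℤ_[p]`,
the whole group lands in `GL_n(ℤ_[p])`, and reduction modulo `p` separates any given `g ≠ 1` from
the identity once `p` is also prime to the nonzero entries of `g - 1`. A residually finite simple
group is finite. So a representation of an infinite simple finitely generated group over `ℚ`
cannot be faithful, and by simplicity its kernel is everything.
-/

open Function

theorem Padic.norm_ratCast_eq_one_of_lt {p : ℕ} [Fact p.Prime] {q : ℚ} (hq : q ≠ 0)
    (hnum : q.num.natAbs < p) (hden : q.den < p) : ‖(q : ℚ_[p])‖ = 1 := by
  have hnum' : ¬ (p : ℤ) ∣ q.num := by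
    rw [Int.natCast_dvd]
    exact Nat.not_dvd_of_pos_of_lt (Int.natAbs_pos.2 (Rat.num_ne_zero.2 hq)) hnum
  rw [Padic.eq_padicNorm, padicNorm.eq_zpow_of_nonzero hq, padicValRat,
    padicValInt.eq_zero_of_not_dvd hnum',
    padicValNat.eq_zero_of_not_dvd (Nat.not_dvd_of_pos_of_lt q.pos hden)]
  simp

theorem Set.Finite.exists_prime_norm_ratCast_eq_one {Q : Set ℚ} (hQ : Q.Finite) :
    ∃ (p : ℕ) (_ : Fact p.Prime), ∀ q ∈ Q, q ≠ 0 → ‖(q : ℚ_[p])‖ = 1 := by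
  obtain ⟨B, hB⟩ := (hQ.image fun q => q.num.natAbs + q.den).bddAbove
  obtain ⟨p, hBp, hp⟩ := Nat.exists_infinite_primes (B + 1)
  have := Fact.mk hp
  refine ⟨p, ‹_›, fun q hq hq0 => Padic.norm_ratCast_eq_one_of_lt hq0 ?_ ?_⟩ <;>
  · have := hB (Set.mem_image_of_mem _ hq)
    omega

theorem MonoidHom.exists_comp_eq_of_closure_eq_top {G M N : Type*} [Group G] [Monoid M]
    [Monoid N] {S : Set G} (hS : Subgroup.closure S = ⊤) (f : G →* M) {ι : N →* M}
    (hι : Injective ι) (hf : ∀ s ∈ S, f s ∈ mrange ι ∧ f s⁻¹ ∈ mrange ι) :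
    ∃ f' : G →* N, ι.comp f' = f := by
  have hle : mrange f ≤ mrange ι := by
    rw [mrange_eq_map, ← Subgroup.top_toSubmonoid, ← hS, Subgroup.closure_toSubmonoid,
      map_mclosure, Submonoid.closure_le]
    rintro _ ⟨s, hs | hs, rfl⟩
    · exact (hf s hs).1
    · simpa using (hf _ hs).2
  let e := MulEquiv.ofLeftInverse' ι (leftInverse_invFun hι)
  exact ⟨e.symm.toMonoidHom.comp (f.codRestrict _ fun g => hle ⟨g, rfl⟩),
    by ext g; simpa [e] using invFun_eq (hle ⟨g, rfl⟩)⟩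

theorem RingHom.mapMatrix_ne_one_of_isUnit {n R S : Type*} [Fintype n] [DecidableEq n]
    [Ring R] [Ring S] [Nontrivial S] (f : R →+* S) {A : Matrix n n R} {i j : n}
    (h : IsUnit ((A - 1) i j)) : f.mapMatrix A ≠ 1 := by
  intro hA
  have : f.mapMatrix (A - 1) i j = 0 := by rw [map_sub, map_one, hA, sub_self]; rfl
  exact (h.map f).ne_zero this

theorem PadicInt.mem_mrange_mapMatrix_coe {p : ℕ} [Fact p.Prime] {n : Type*} [Fintype n]
    [DecidableEq n] {A : Matrix n n ℚ_[p]} (h : ∀ i j, ‖A i j‖ ≤ 1) :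
    A ∈ MonoidHom.mrange (PadicInt.Coe.ringHom.mapMatrix : Matrix n n ℤ_[p] →+* _) :=
  ⟨Matrix.of fun i j => ⟨A i j, h i j⟩, rfl⟩

theorem Matrix.exists_monoidHom_zmod_ne_one {G n : Type*} [Group G] [Group.FG G] [Fintype n]
    [DecidableEq n] (M : G →* Matrix n n ℚ) {g : G} (hg : M g ≠ 1) :
    ∃ (p : ℕ) (_ : Fact p.Prime) (ψ : G →* Matrix n n (ZMod p)), ψ g ≠ 1 := by
  obtain ⟨S, hS⟩ := Group.FG.out (G := G)
  set 𝒜 : Set (Matrix n n ℚ) := insert (M g - 1) (M '' (S ∪ (↑S)⁻¹))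
  have h𝒜 : 𝒜.Finite := ((S.finite_toSet.union S.finite_toSet.inv).image M).insert _
  obtain ⟨p, _, hp⟩ :=
    (h𝒜.biUnion fun A _ => Set.finite_range (uncurry A)).exists_prime_norm_ratCast_eq_one
  have hunit : ∀ A ∈ 𝒜, ∀ i j, A i j ≠ 0 → ‖(A i j : ℚ_[p])‖ = 1 :=
    fun A hA i j => hp _ (Set.mem_biUnion hA ⟨(i, j), rfl⟩)
  have hint : ∀ A ∈ 𝒜, ∀ i j, ‖(A i j : ℚ_[p])‖ ≤ 1 := fun A hA i j => by
    by_cases h : A i j = 0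
    · simp [h]
    · exact (hunit A hA i j h).le
  let ι := (PadicInt.Coe.ringHom (p := p)).mapMatrix (m := n)
  obtain ⟨f', hf'⟩ := MonoidHom.exists_comp_eq_of_closure_eq_top hS
    ((Rat.castHom ℚ_[p]).mapMatrix.toMonoidHom.comp M) (ι := ι.toMonoidHom)
    (Matrix.map_injective Subtype.val_injective) fun s hs =>
      ⟨PadicInt.mem_mrange_mapMatrix_coe (hint _ (.inr ⟨s, .inl hs, rfl⟩)),
        PadicInt.mem_mrange_mapMatrix_coe (hint _ (.inr ⟨s⁻¹, .inr (by simpa using hs), rfl⟩))⟩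
  obtain ⟨i, j, hij⟩ : ∃ i j, (M g - 1) i j ≠ 0 := by
    by_contra! h
    exact hg (sub_eq_zero.1 (Matrix.ext h))
  refine ⟨p, ‹_›, PadicInt.toZMod.mapMatrix.toMonoidHom.comp f',
    RingHom.mapMatrix_ne_one_of_isUnit _ (i := i) (j := j) ?_⟩
  have hentry : ι (f' g - 1) i j = ((M g - 1) i j : ℚ_[p]) := by
    rw [map_sub, map_one, show ι (f' g) = _ from DFunLike.congr_fun hf' g]
    simp [Matrix.one_apply, apply_ite (Rat.cast : ℚ → ℚ_[p])]
  rw [PadicInt.isUnit_iff, PadicInt.norm_def]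
  change ‖ι (f' g - 1) i j‖ = 1
  rw [hentry]
  exact hunit _ (.inl rfl) i j hij

theorem Group.residuallyFinite_of_injective_matrix {G n : Type*} [Group G] [Group.FG G]
    [Fintype n] [DecidableEq n] (M : G →* Matrix n n ℚ) (hM : Injective M) :
    ResiduallyFinite G :=
  residuallyFinite_of_forall_exists_finite_monoidHom fun g hg => by
    obtain ⟨p, _, ψ, hψ⟩ := Matrix.exists_monoidHom_zmod_ne_one M (g := g) (by
      rwa [← map_one M, hM.ne_iff])
    exact ⟨_, inferInstance, inferInstance, ψ.toHomUnits, fun h => hψ (congrArg Units.val h)⟩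

theorem Group.residuallyFinite_of_injective_linearEquiv {G V : Type*} [Group G] [Group.FG G]
    [AddCommGroup V] [Module ℚ V] [FiniteDimensional ℚ V] (ρ : G →* (V ≃ₗ[ℚ] V))
    (hρ : Injective ρ) : ResiduallyFinite G := by
  let toMatrix : (V ≃ₗ[ℚ] V) →* Matrix _ _ ℚ :=
    (LinearMap.toMatrixAlgEquiv (Module.finBasis ℚ V)).toMonoidHom.comp
      LinearEquiv.automorphismGroup.toLinearMapMonoidHom
  refine residuallyFinite_of_injective_matrix (toMatrix.comp ρ) ?_
  exact ((LinearMap.toMatrixAlgEquiv _).injective.comp LinearEquiv.toLinearMap_injective).comp hρ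

theorem IsSimpleGroup.finite_of_residuallyFinite {G : Type*} [Group G] [IsSimpleGroup G]
    [Group.ResiduallyFinite G] : Finite G := by
  obtain ⟨g, hg⟩ := exists_ne (1 : G)
  obtain ⟨H, hgH⟩ := Group.exists_finiteIndexNormalSubgroup_notMem g hg
  obtain hH | hH := IsSimpleGroup.eq_bot_or_eq_top_of_normal H.toSubgroup inferInstance
  · apply Nat.finite_of_card_ne_zero
    rw [← Subgroup.index_bot, ← hH]
    exact Subgroup.FiniteIndex.index_ne_zero
  · exact absurd (hH.symm ▸ Subgroup.mem_top g : g ∈ H.toSubgroup) hgH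

/-- A representation of a finitely generated infinite simple group on a
finite-dimensional rational vector space is trivial. -/
theorem fg_infinite_simple_rep_on_findim_rat_vector_space_trivial
    (G : Type) [Group G] [Group.FG G] [Infinite G] [IsSimpleGroup G]
    (V : Type) [AddCommGroup V] [Module ℚ V] [FiniteDimensional ℚ V]
    (ρ : G →* (V ≃ₗ[ℚ] V)) :
    ∀ g : G, ρ g = 1 := by
  obtain hker | hker := IsSimpleGroup.eq_bot_or_eq_top_of_normal ρ.ker ρ.normal_ker
  · have := Group.residuallyFinite_of_injective_linearEquiv ρ (ρ.ker_eq_bot_iff.1 hker)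
    have := IsSimpleGroup.finite_of_residuallyFinite (G := G)
    exact (not_finite G).elim
  · intro g
    rw [MonoidHom.ker_eq_top_iff.1 hker]
    rfl
end
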